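/- The base packing value equals the strength and the base covering value equals the fractional arboricity: τ(M) = S(M) and υ(M) = D(M). -/

import Mathlib

open Set Matroid

/-- The rank of a set in a matroid: the maximum cardinality of an independent subset. -/
noncomputable def Matroid.rk' {α : Type*} (M : Matroid α) (X : Set α) : ℕ :=
  sSup {n : ℕ | ∃ I, I ⊆ X ∧ M.Indep I ∧ n = Nat.card I}

/-- A matroid is loopless if every singleton of the ground set is independent. -/
def Matroid.Loopless' {α : Type*} (M : Matroid α) : Prop := ∀ e ∈ M.E, M.Indep {e}

/-- The strength `S(M) = min{ |X| / (r(E) − r(E−X)) : X ⊆ E, r(E) > r(E−X) }`. -/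
noncomputable def Matroid.strength {α : Type*} (M : Matroid α) : ℝ :=
  sInf {s : ℝ | ∃ X, X ⊆ M.E ∧ M.rk' (M.E \ X) < M.rk' M.E ∧
    s = (Nat.card X : ℝ) / ((M.rk' M.E : ℝ) - (M.rk' (M.E \ X) : ℝ))}

/-- The fractional arboricity `D(M) = max{ |X| / r(X) : X ⊆ E, r(X) > 0 }`. -/
noncomputable def Matroid.arboricity {α : Type*} (M : Matroid α) : ℝ :=
  sSup {s : ℝ | ∃ X, X ⊆ M.E ∧ 0 < M.rk' X ∧ s = (Nat.card X : ℝ) / (M.rk' X : ℝ)}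

/-- The base packing value `τ(M)`. -/
noncomputable def Matroid.packingValue {α : Type*} [Fintype α] (M : Matroid α) : ℝ :=
  sSup {t : ℝ | ∃ lam : Set α → ℝ, (∀ B, 0 ≤ lam B) ∧ (∀ B, ¬ M.IsBase B → lam B = 0) ∧
    (∀ e ∈ M.E, (∑ B : Set α, B.indicator (fun _ ↦ lam B) e) ≤ 1) ∧
    t = ∑ B : Set α, lam B}

/-- The base covering value `υ(M)`. -/
noncomputable def Matroid.coveringValue {α : Type*} [Fintype α] (M : Matroid α) : ℝ :=
  sInf {t : ℝ | ∃ kap : Set α → ℝ, (∀ B, 0 ≤ kap B) ∧ (∀ B, ¬ M.IsBase B → kap B = 0) ∧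
    (∀ e ∈ M.E, 1 ≤ (∑ B : Set α, B.indicator (fun _ ↦ kap B) e)) ∧
    t = ∑ B : Set α, kap B}

/-!
Weak duality is double counting: a base meets `X` in at least `r(E) - r(E - X)` elements, and
meets `X` in an independent set, hence in at most `r(X)` elements.

For the reverse inequalities take an extremal set `X₀` with ratio `p / q`. Extremality says
`q |X| ≤ p r(X)` for all `X` (arboricity), resp. `p (r(E) - r(E - X)) ≤ q |X|` (strength).
Replacing every element by `q` parallel copies turns these into the hypotheses of Edmonds'
covering theorem, resp. of Edmonds' packing theorem (which follows from covering in the dual),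
giving `p` independent sets covering every element at least `q` times, resp. `p` bases using
every element at most `q` times. Weight `1 / q` on each of them is a fractional covering,
resp. packing, of value `p / q`. Edmonds' covering theorem is Rado's theorem applied to the
`k`-fold sum of the matroid.
-/

namespace Matroid

variable {α β ι κ : Type*} {M : Matroid α} {N : Matroid β} {A : ι → Set β}
  {B I X Y : Set α}

section Rank

lemma cast_rk'_eq_eRk [M.RankFinite] (X : Set α) : (M.rk' X : ℕ∞) = M.eRk X := by
  obtain ⟨I, hI⟩ := M.exists_isBasis' X
  have hIfin : I.Finite := hI.indep.finite
  suffices IsGreatest {n : ℕ | ∃ J, J ⊆ X ∧ M.Indep J ∧ n = Nat.card J} I.ncard by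
    rw [rk', this.csSup_eq, hIfin.cast_ncard_eq, hI.encard_eq_eRk]
  refine ⟨⟨I, hI.subset, hI.indep, rfl⟩, ?_⟩
  rintro _ ⟨J, hJX, hJ, rfl⟩
  rw [Nat.card_coe_set_eq, ← Nat.cast_le (α := ℕ∞), hJ.finite.cast_ncard_eq,
    hIfin.cast_ncard_eq, hI.encard_eq_eRk]
  exact hJ.encard_le_eRk_of_subset hJX

lemma IsBasis'.rk'_eq_ncard [M.RankFinite] (hI : M.IsBasis' I X) : M.rk' X = I.ncard := by
  rw [← Nat.cast_inj (R := ℕ∞), cast_rk'_eq_eRk, hI.indep.finite.cast_ncard_eq,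
    hI.encard_eq_eRk]

lemma Indep.ncard_le_rk' [M.RankFinite] (hI : M.Indep I) (hIX : I ⊆ X) : I.ncard ≤ M.rk' X := by
  rw [← Nat.cast_le (α := ℕ∞), cast_rk'_eq_eRk, hI.finite.cast_ncard_eq]
  exact hI.encard_le_eRk_of_subset hIX

lemma IsBase.ncard_eq_rk' [M.RankFinite] (hB : M.IsBase B) : B.ncard = M.rk' M.E :=
  hB.isBasis_ground.isBasis'.rk'_eq_ncard.symm

lemma rk'_mono [M.RankFinite] (hXY : X ⊆ Y) : M.rk' X ≤ M.rk' Y := by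
  rw [← Nat.cast_le (α := ℕ∞), cast_rk'_eq_eRk, cast_rk'_eq_eRk]
  exact M.eRk_mono hXY

lemma rk'_empty [M.RankFinite] : M.rk' ∅ = 0 := by
  rw [← Nat.cast_inj (R := ℕ∞), cast_rk'_eq_eRk, eRk_empty, Nat.cast_zero]

lemma rk'_inter_add_rk'_union_le [M.RankFinite] (X Y : Set α) :
    M.rk' (X ∩ Y) + M.rk' (X ∪ Y) ≤ M.rk' X + M.rk' Y := by
  rw [← Nat.cast_le (α := ℕ∞)]
  push_cast
  simp only [cast_rk'_eq_eRk]
  exact M.eRk_inter_add_eRk_union_le X Y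

lemma rk'_le_ncard [Finite α] (M : Matroid α) (X : Set α) : M.rk' X ≤ X.ncard := by
  rw [← Nat.cast_le (α := ℕ∞), cast_rk'_eq_eRk, X.toFinite.cast_ncard_eq]
  exact M.eRk_le_encard X

lemma indep_of_ncard_le_rk' [Finite α] (h : X.ncard ≤ M.rk' X) : M.Indep X := by
  obtain ⟨I, hI⟩ := M.exists_isBasis' X
  rw [hI.rk'_eq_ncard] at h
  rw [← Set.eq_of_subset_of_ncard_le hI.subset h]
  exact hI.indep

lemma Indep.isBase_of_rk'_le [M.RankFinite] (hI : M.Indep I) (h : M.rk' M.E ≤ I.ncard) :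
    M.IsBase I := by
  refine hI.isBase_of_eRk_ge hI.finite ?_
  rw [← eRk_ground, ← cast_rk'_eq_eRk, hI.eRk_eq_encard, ← hI.finite.cast_ncard_eq]
  exact_mod_cast h

lemma IsBase.rk'_ground_le_rk'_diff_add_ncard_inter [M.RankFinite] (hB : M.IsBase B)
    (X : Set α) : M.rk' M.E ≤ M.rk' (M.E \ X) + (B ∩ X).ncard := by
  have hdiff : (B \ X).ncard ≤ M.rk' (M.E \ X) :=
    (hB.indep.subset sdiff_subset).ncard_le_rk' (sdiff_subset_sdiff_left hB.subset_ground)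
  have hsplit := Set.ncard_inter_add_ncard_sdiff_eq_ncard B X hB.indep.finite
  rw [hB.ncard_eq_rk'] at hsplit
  omega

lemma rk'_dual_add_rk' [M.Finite] (hX : X ⊆ M.E) :
    M✶.rk' X + M.rk' M.E = M.rk' (M.E \ X) + X.ncard := by
  rw [← Nat.cast_inj (R := ℕ∞)]
  push_cast
  rw [cast_rk'_eq_eRk, cast_rk'_eq_eRk, cast_rk'_eq_eRk, eRk_ground,
    (M.ground_finite.subset hX).cast_ncard_eq]
  exact M.eRk_dual_add_eRank X hX

lemma rk'_comap (N : Matroid β) [N.RankFinite] (f : α → β) (X : Set α) :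
    (N.comap f).rk' X = N.rk' (f '' X) := by
  rw [← Nat.cast_inj (R := ℕ∞), cast_rk'_eq_eRk, cast_rk'_eq_eRk, eRk_comap]

lemma Loopless'.rk'_pos [M.RankFinite] (hloop : M.Loopless') (hX : X ⊆ M.E) (hne : X.Nonempty) :
    0 < M.rk' X := by
  obtain ⟨e, he⟩ := hne
  exact Nat.one_pos.trans_le
    (by simpa using (hloop e (hX he)).ncard_le_rk' (singleton_subset_iff.mpr he))

end Rank

section Rado

def RadoCondition (N : Matroid β) (A : ι → Set β) : Prop :=
  ∀ J : Finset ι, J.card ≤ N.rk' (⋃ i ∈ J, A i)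

lemma RadoCondition.exists_indep_transversal_of_ncard_le_one [Fintype ι] [Finite β]
    (hA : N.RadoCondition A) (h1 : ∀ i, (A i).ncard ≤ 1) :
    ∃ x : ι → β, (∀ i, x i ∈ A i) ∧ N.Indep (range x) := by
  have hsingleton : ∀ i, ∃ a, A i = {a} := fun i ↦ by
    have := (hA {i}).trans (N.rk'_le_ncard _)
    simp only [Finset.card_singleton, Finset.mem_singleton, iUnion_iUnion_eq_left] at this
    exact ncard_eq_one.mp (le_antisymm (h1 i) this)
  choose a ha using hsingleton
  have hrange : (⋃ i ∈ (Finset.univ : Finset ι), A i) = range a := by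
    simp only [Finset.mem_univ, iUnion_true, ha, iUnion_singleton_eq_range]
  refine ⟨a, fun i ↦ by simp [ha], indep_of_ncard_le_rk' ?_⟩
  calc (range a).ncard ≤ Fintype.card ι := by
        rw [← image_univ, ← Nat.card_eq_fintype_card, ← ncard_univ]
        exact ncard_image_le (toFinite _)
    _ ≤ N.rk' (range a) := by simpa only [hrange, Finset.card_univ] using hA Finset.univ

open Function in
lemma RadoCondition.update_diff_singleton_or [Finite β] [DecidableEq ι]
    (hA : N.RadoCondition A) (i₀ : ι) {x y : β} (hxy : x ≠ y) :
    N.RadoCondition (update A i₀ (A i₀ \ {x})) ∨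
      N.RadoCondition (update A i₀ (A i₀ \ {y})) := by
  set U : β → Finset ι → Set β := fun z J ↦ ⋃ i ∈ J, update A i₀ (A i₀ \ {z}) i
  by_contra! h
  obtain ⟨⟨J₁, hJ₁⟩, ⟨J₂, hJ₂⟩⟩ :
      (∃ J, N.rk' (U x J) < J.card) ∧ ∃ J, N.rk' (U y J) < J.card := by
    simpa [RadoCondition, U] using h
  have mem_of_lt : ∀ z J, N.rk' (U z J) < J.card → i₀ ∈ J := fun z J hJ ↦ by
    by_contra hi₀
    have hU : U z J = ⋃ i ∈ J, A i :=
      iUnion₂_congr fun i hi ↦ update_of_ne (ne_of_mem_of_not_mem hi hi₀) _ _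
    exact (hA J).not_gt (hU ▸ hJ)
  have hi₁ := mem_of_lt x J₁ hJ₁
  have hi₂ := mem_of_lt y J₂ hJ₂
  have hunion : ⋃ i ∈ J₁ ∪ J₂, A i ⊆ U x J₁ ∪ U y J₂ := by
    intro b hb
    simp only [Finset.mem_union, mem_union, mem_iUnion, exists_prop, U] at hb ⊢
    obtain ⟨i, hi, hbi⟩ := hb
    rcases eq_or_ne i i₀ with rfl | hne
    · rcases eq_or_ne b x with rfl | hbx
      · exact .inr ⟨i, hi₂, by simpa [hxy] using hbi⟩
      · exact .inl ⟨i, hi₁, by simpa [hbx] using hbi⟩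
    · rcases hi with hi | hi
      exacts [.inl ⟨i, hi, by simpa [hne] using hbi⟩,
        .inr ⟨i, hi, by simpa [hne] using hbi⟩]
  have hinter : ⋃ i ∈ (J₁ ∩ J₂).erase i₀, A i ⊆ U x J₁ ∩ U y J₂ := by
    intro b hb
    simp only [Finset.mem_erase, Finset.mem_inter, mem_inter_iff, mem_iUnion, exists_prop, U]
      at hb ⊢
    obtain ⟨i, ⟨hne, hi₁, hi₂⟩, hbi⟩ := hb
    exact ⟨⟨i, hi₁, by simpa [hne] using hbi⟩, ⟨i, hi₂, by simpa [hne] using hbi⟩⟩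
  have hsubmod := N.rk'_inter_add_rk'_union_le (U x J₁) (U y J₂)
  have hcard := Finset.card_union_add_card_inter J₁ J₂
  have herase := Finset.card_erase_add_one (Finset.mem_inter.mpr ⟨hi₁, hi₂⟩)
  have h₁ := (hA _).trans (rk'_mono hunion)
  have h₂ := (hA _).trans (rk'_mono hinter)
  omega

theorem RadoCondition.exists_indep_transversal [Fintype ι] [Finite β] (hA : N.RadoCondition A) :
    ∃ x : ι → β, (∀ i, x i ∈ A i) ∧ N.Indep (range x) := by
  classical
  induction hn : ∑ i, (A i).ncard using Nat.strong_induction_on generalizing A with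
  | _ n ih =>
  by_cases hsmall : ∀ i, (A i).ncard ≤ 1
  · exact hA.exists_indep_transversal_of_ncard_le_one hsmall
  obtain ⟨i₀, hi₀⟩ : ∃ i, 1 < (A i).ncard := by
    simpa only [not_forall, not_le] using hsmall
  obtain ⟨x, y, hx, hy, hxy⟩ := (one_lt_ncard_iff (toFinite _)).mp hi₀
  have of_shrink : ∀ z ∈ A i₀, N.RadoCondition (Function.update A i₀ (A i₀ \ {z})) →
      ∃ t : ι → β, (∀ i, t i ∈ A i) ∧ N.Indep (range t) := fun z hz hA' ↦ by
    have hle : Function.update A i₀ (A i₀ \ {z}) ≤ A := update_le_self_iff.mpr sdiff_subset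
    have hlt : ∑ i, (Function.update A i₀ (A i₀ \ {z}) i).ncard < n := hn ▸
      Finset.sum_lt_sum (fun i _ ↦ ncard_le_ncard (hle i)) ⟨i₀, Finset.mem_univ _, by
        simpa using ncard_sdiff_singleton_lt_of_mem hz⟩
    obtain ⟨t, ht, hind⟩ := ih _ hlt hA' rfl
    exact ⟨t, fun i ↦ hle i (ht i), hind⟩
  rcases hA.update_diff_singleton_or i₀ hxy with h | h
  exacts [of_shrink x hx h, of_shrink y hy h]

end Rado

theorem exists_indep_cover [Finite β] (N : Matroid β) (k : ℕ)
    (h : ∀ X ⊆ N.E, X.ncard ≤ k * N.rk' X) :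
    ∃ I : Fin k → Set β, (∀ j, N.Indep (I j)) ∧ N.E ⊆ ⋃ j, I j := by
  have : Fintype N.E := Fintype.ofFinite _
  set NS := Matroid.sum' fun _ : Fin k ↦ N
  set A : N.E → Set (Fin k × β) := fun e ↦ univ ×ˢ {(e : β)}
  have hRado : NS.RadoCondition A := by
    intro J
    set X : Set β := Subtype.val '' (J : Set N.E)
    obtain ⟨I, hI⟩ := N.exists_isBasis' X
    have hindep : NS.Indep (univ ×ˢ I) := by
      simpa [NS] using fun _ ↦ hI.indep
    have hsub : univ ×ˢ I ⊆ ⋃ e ∈ J, A e := by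
      rintro ⟨j, b⟩ ⟨-, hb⟩
      obtain ⟨e, heJ, rfl⟩ := hI.subset hb
      simp only [mem_iUnion, exists_prop]
      exact ⟨e, heJ, by simp [A]⟩
    calc J.card = X.ncard := by
          rw [ncard_image_of_injective _ Subtype.val_injective, ncard_coe_finset]
      _ ≤ k * N.rk' X := h X (by rintro _ ⟨e, -, rfl⟩; exact e.2)
      _ = (univ ×ˢ I).ncard := by
          rw [hI.rk'_eq_ncard, ncard_prod, ncard_univ, Nat.card_eq_fintype_card, Fintype.card_fin]
      _ ≤ NS.rk' (⋃ e ∈ J, A e) := hindep.ncard_le_rk' hsub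
  -- The transversal gives every element `e` a colour `(x e).1`; each colour class is independent.
  obtain ⟨x, hxA, hxind⟩ := hRado.exists_indep_transversal
  refine ⟨fun j ↦ Prod.mk j ⁻¹' range x, fun j ↦ sum'_indep_iff.mp hxind j,
    fun b hb ↦ ?_⟩
  have hx : (x ⟨b, hb⟩).2 = b := by simpa [A] using hxA ⟨b, hb⟩
  exact mem_iUnion.mpr ⟨(x ⟨b, hb⟩).1, ⟨b, hb⟩, Prod.ext rfl hx⟩

section Multiplicities

open Function
open scoped Classical Finset

lemma card_filter_mk_mem_eq_ite [Fintype κ] {U : Set (α × κ)} (hU : InjOn Prod.fst U) (e : α) :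
    #{i | (e, i) ∈ U} = if e ∈ Prod.fst '' U then 1 else 0 := by
  split_ifs with he
  · obtain ⟨⟨e, i⟩, hi, rfl⟩ := he
    refine Finset.card_eq_one.mpr ⟨i, Finset.eq_singleton_iff_unique_mem.mpr ⟨by simpa, ?_⟩⟩
    intro i' hi'
    replace hi' : (e, i') ∈ U := by simpa using hi'
    exact congrArg Prod.snd (hU hi' hi rfl)
  · exact Finset.card_eq_zero.mpr <| Finset.filter_eq_empty_iff.mpr fun i _ hi ↦
      he ⟨_, hi, rfl⟩

lemma card_filter_mem_image_fst [Fintype κ] [Fintype ι] {U : ι → Set (α × κ)}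
    (hU : ∀ j, InjOn Prod.fst (U j)) (e : α) :
    #{j | e ∈ Prod.fst '' U j} = ∑ i : κ, #{j | (e, i) ∈ U j} := by
  simp only [Finset.card_filter]
  rw [Finset.sum_comm]
  simp only [← Finset.card_filter, card_filter_mk_mem_eq_ite (hU _)]

theorem exists_indep_multicover [Finite α] (M : Matroid α) (p q : ℕ)
    (h : ∀ X ⊆ M.E, q * X.ncard ≤ p * M.rk' X) :
    ∃ I : Fin p → Set α, (∀ j, M.Indep (I j)) ∧ ∀ e ∈ M.E, q ≤ #{j | e ∈ I j} := by
  -- `N` replaces every element `e` by the `q` parallel copies `(e, i)`.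
  set N := M.comap (Prod.fst : α × Fin q → α)
  have hN : ∀ Y ⊆ N.E, Y.ncard ≤ p * N.rk' Y := fun Y hY ↦
    calc Y.ncard ≤ ((Prod.fst '' Y) ×ˢ univ).ncard :=
          ncard_le_ncard fun y hy ↦ ⟨mem_image_of_mem _ hy, mem_univ _⟩
      _ = q * (Prod.fst '' Y).ncard := by simp [ncard_prod, mul_comm]
      _ ≤ p * M.rk' (Prod.fst '' Y) := h _ (image_subset_iff.mpr hY)
      _ = p * N.rk' Y := by rw [rk'_comap]
  obtain ⟨U, hU, hcover⟩ := N.exists_indep_cover p hN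
  refine ⟨fun j ↦ Prod.fst '' U j, fun j ↦ (comap_indep_iff.mp (hU j)).1, fun e he ↦ ?_⟩
  rw [card_filter_mem_image_fst fun j ↦ (comap_indep_iff.mp (hU j)).2]
  calc q = ∑ _i : Fin q, 1 := by simp
    _ ≤ ∑ i : Fin q, #{j | (e, i) ∈ U j} := Finset.sum_le_sum fun i _ ↦ by
      obtain ⟨j, hj⟩ := mem_iUnion.mp (hcover (show (e, i) ∈ N.E from he))
      exact Finset.card_pos.mpr ⟨j, by simpa using hj⟩

theorem exists_pairwise_disjoint_isBase [Finite α] (M : Matroid α) (p : ℕ)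
    (h : ∀ X ⊆ M.E, p * (M.rk' M.E - M.rk' (M.E \ X)) ≤ X.ncard) :
    ∃ B : Fin p → Set α, (∀ j, M.IsBase (B j)) ∧ Pairwise (Disjoint on B) := by
  have hdual : ∀ Z ⊆ M✶.E, (p - 1) * Z.ncard ≤ p * M✶.rk' Z := fun Z hZ ↦ by
    have hrk := M.rk'_dual_add_rk' hZ
    have hmono : M.rk' (M.E \ Z) ≤ M.rk' M.E := rk'_mono sdiff_subset
    have hp : p * M✶.rk' Z + p * (M.rk' M.E - M.rk' (M.E \ Z)) = p * Z.ncard := by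
      rw [← mul_add]; congr 1; omega
    have := h Z hZ
    rw [Nat.sub_mul, one_mul]
    omega
  obtain ⟨T, hT, hcover⟩ := M✶.exists_indep_multicover p (p - 1) hdual
  choose B hB hBT using fun j ↦ (show M.Coindep (T j) from hT j).exists_isBase_subset_compl
  -- Every element avoids at most one of the `T k`, while `B j` avoids `T j`.
  refine ⟨B, hB, fun j j' hjj' ↦ Set.disjoint_left.mpr fun e hej hej' ↦ ?_⟩
  have hcov := hcover e ((hB j).subset_ground hej)
  have hsplit := Finset.card_filter_add_card_filter_not
    (s := (Finset.univ : Finset (Fin p))) (p := fun k ↦ e ∈ T k)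
  have hmissed : #{j, j'} ≤ #{k | e ∉ T k} := Finset.card_le_card fun k hk ↦ by
    rcases Finset.mem_insert.mp hk with rfl | hk
    · simpa using (hBT k hej).2
    · rw [Finset.mem_singleton.mp hk]; simpa using (hBT j' hej').2
  rw [Finset.card_pair hjj'] at hmissed
  simp only [Finset.card_univ, Fintype.card_fin] at hsplit
  omega

theorem exists_isBase_multipacking [Finite α] (M : Matroid α) (p q : ℕ) (hq : 0 < q)
    (h : ∀ X ⊆ M.E, p * (M.rk' M.E - M.rk' (M.E \ X)) ≤ q * X.ncard) :
    ∃ B : Fin p → Set α, (∀ j, M.IsBase (B j)) ∧ ∀ e, #{j | e ∈ B j} ≤ q := by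
  have : NeZero q := ⟨hq.ne'⟩
  set N := M.comap (Prod.fst : α × Fin q → α)
  have hrk : N.rk' N.E = M.rk' M.E := by
    rw [rk'_comap, comap_ground_eq, image_preimage_eq _ Prod.fst_surjective]
  have hN : ∀ Z ⊆ N.E, p * (N.rk' N.E - N.rk' (N.E \ Z)) ≤ Z.ncard := fun Z hZ ↦ by
    set X := {e ∈ M.E | ∀ i, (e, i) ∈ Z}
    have hXZ : q * X.ncard ≤ Z.ncard :=
      calc q * X.ncard = (X ×ˢ (univ : Set (Fin q))).ncard := by simp [ncard_prod, mul_comm]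
        _ ≤ Z.ncard := ncard_le_ncard fun ⟨e, i⟩ ⟨he, _⟩ ↦ he.2 i
    have hdiff : M.rk' (M.E \ X) ≤ N.rk' (N.E \ Z) := by
      rw [rk'_comap]
      refine rk'_mono fun e ⟨he, heX⟩ ↦ ?_
      obtain ⟨i, hi⟩ : ∃ i, (e, i) ∉ Z := by simpa [X, he] using heX
      exact ⟨(e, i), ⟨he, hi⟩, rfl⟩
    calc p * (N.rk' N.E - N.rk' (N.E \ Z)) ≤ p * (M.rk' M.E - M.rk' (M.E \ X)) := by
          rw [hrk]; gcongr
      _ ≤ q * X.ncard := h X (sep_subset _ _)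
      _ ≤ Z.ncard := hXZ
  obtain ⟨B, hB, hdisj⟩ := N.exists_pairwise_disjoint_isBase p hN
  have hind (j : Fin p) := comap_indep_iff.mp (hB j).indep
  refine ⟨fun j ↦ Prod.fst '' B j, fun j ↦ (hind j).1.isBase_of_rk'_le ?_, fun e ↦ ?_⟩
  · rw [(hind j).2.ncard_image, (hB j).ncard_eq_rk', hrk]
  rw [card_filter_mem_image_fst fun j ↦ (hind j).2]
  calc ∑ i : Fin q, #{j | (e, i) ∈ B j} ≤ ∑ _i : Fin q, 1 :=
        Finset.sum_le_sum fun i _ ↦ Finset.card_le_one.mpr fun j hj j' hj' ↦ by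
          by_contra hne
          exact Set.disjoint_left.mp (hdisj hne) (by simpa using hj) (by simpa using hj')
    _ = q := by simp

end Multiplicities

section Fractional

variable [Fintype α]

open scoped Classical Finset

lemma sum_mul_ncard_inter_eq (w : Set α → ℝ) (X : Set α) :
    ∑ B : Set α, w B * (B ∩ X).ncard =
      ∑ e ∈ X.toFinset, ∑ B : Set α, B.indicator (fun _ ↦ w B) e := by
  rw [Finset.sum_comm]
  refine Finset.sum_congr rfl fun B _ ↦ ?_
  rw [Finset.sum_indicator_eq_sum_filter, Finset.sum_const, nsmul_eq_mul, mul_comm,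
    ncard_eq_toFinset_card']
  congr 3
  ext e
  simp [and_comm]

lemma sum_le_ncard_div_of_packing {lam : Set α → ℝ} (h0 : ∀ B, 0 ≤ lam B)
    (hbase : ∀ B, ¬ M.IsBase B → lam B = 0)
    (hload : ∀ e ∈ M.E, ∑ B : Set α, B.indicator (fun _ ↦ lam B) e ≤ 1)
    {X : Set α} (hX : X ⊆ M.E) (hlt : M.rk' (M.E \ X) < M.rk' M.E) :
    ∑ B : Set α, lam B ≤
      (Nat.card X : ℝ) / ((M.rk' M.E : ℝ) - (M.rk' (M.E \ X) : ℝ)) := by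
  rw [le_div_iff₀ (sub_pos.mpr (by exact_mod_cast hlt)), Finset.sum_mul]
  calc ∑ B : Set α, lam B * ((M.rk' M.E : ℝ) - M.rk' (M.E \ X))
      ≤ ∑ B : Set α, lam B * (B ∩ X).ncard := Finset.sum_le_sum fun B _ ↦ by
        by_cases hB : M.IsBase B
        · have := hB.rk'_ground_le_rk'_diff_add_ncard_inter X
          gcongr
          · exact h0 B
          rw [sub_le_iff_le_add']
          exact_mod_cast this
        · simp [hbase B hB]
    _ = ∑ e ∈ X.toFinset, ∑ B : Set α, B.indicator (fun _ ↦ lam B) e :=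
        sum_mul_ncard_inter_eq ..
    _ ≤ ∑ e ∈ X.toFinset, 1 :=
        Finset.sum_le_sum fun e he ↦ hload e (hX (mem_toFinset.mp he))
    _ = Nat.card X := by simp

lemma ncard_div_le_sum_of_covering {kap : Set α → ℝ} (h0 : ∀ B, 0 ≤ kap B)
    (hbase : ∀ B, ¬ M.IsBase B → kap B = 0)
    (hload : ∀ e ∈ M.E, 1 ≤ ∑ B : Set α, B.indicator (fun _ ↦ kap B) e)
    {X : Set α} (hX : X ⊆ M.E) (hpos : 0 < M.rk' X) :
    (Nat.card X : ℝ) / (M.rk' X : ℝ) ≤ ∑ B : Set α, kap B := by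
  rw [div_le_iff₀ (by exact_mod_cast hpos), Finset.sum_mul]
  calc (Nat.card X : ℝ) = ∑ e ∈ X.toFinset, 1 := by simp
    _ ≤ ∑ e ∈ X.toFinset, ∑ B : Set α, B.indicator (fun _ ↦ kap B) e :=
        Finset.sum_le_sum fun e he ↦ hload e (hX (mem_toFinset.mp he))
    _ = ∑ B : Set α, kap B * (B ∩ X).ncard := (sum_mul_ncard_inter_eq ..).symm
    _ ≤ ∑ B : Set α, kap B * M.rk' X := Finset.sum_le_sum fun B _ ↦ by
        by_cases hB : M.IsBase B
        · gcongr
          · exact h0 B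
          exact_mod_cast (hB.indep.subset inter_subset_left).ncard_le_rk' inter_subset_right
        · simp [hbase B hB]

lemma exists_weight_of_family [Fintype ι] (B : ι → Set α) {c : ℝ} (hc : 0 ≤ c) :
    ∃ w : Set α → ℝ, (∀ A, 0 ≤ w A) ∧ (∀ A, A ∉ range B → w A = 0) ∧
      (∀ e, ∑ A : Set α, A.indicator (fun _ ↦ w A) e = c * #{j | e ∈ B j}) ∧
      ∑ A : Set α, w A = c * Fintype.card ι := by
  refine ⟨fun A ↦ ∑ j, if B j = A then c else 0,
    fun A ↦ Finset.sum_nonneg fun j _ ↦ by split_ifs <;> simp [hc],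
    fun A hA ↦ Finset.sum_eq_zero fun j _ ↦ if_neg fun h ↦ hA ⟨j, h⟩, fun e ↦ ?_, ?_⟩
  · have hswap : ∀ A : Set α, A.indicator (fun _ ↦ ∑ j, if B j = A then c else 0) e =
        ∑ j, if B j = A then A.indicator (fun _ ↦ c) e else 0 := fun A ↦ by
      by_cases he : e ∈ A <;> simp [he]
    simp only [hswap]
    rw [Finset.sum_comm]
    simp [Set.indicator_apply, Finset.sum_ite, mul_comm]
  · rw [Finset.sum_comm]
    simp [mul_comm]

lemma exists_fractional_packing {p q : ℕ} (hq : 0 < q) {B : Fin p → Set α}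
    (hB : ∀ j, M.IsBase (B j)) (hBq : ∀ e, #{j | e ∈ B j} ≤ q) :
    ∃ lam : Set α → ℝ, (∀ A, 0 ≤ lam A) ∧ (∀ A, ¬ M.IsBase A → lam A = 0) ∧
      (∀ e ∈ M.E, ∑ A : Set α, A.indicator (fun _ ↦ lam A) e ≤ 1) ∧
      (p / q : ℝ) = ∑ A : Set α, lam A := by
  obtain ⟨lam, h0, hsupp, hload, htotal⟩ :=
    exists_weight_of_family B (inv_nonneg.mpr (Nat.cast_nonneg q))
  refine ⟨lam, h0, fun A hA ↦ hsupp A ?_, fun e _ ↦ ?_, ?_⟩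
  · rintro ⟨j, rfl⟩
    exact hA (hB j)
  · rw [hload, inv_mul_le_one₀ (by exact_mod_cast hq)]
    exact_mod_cast hBq e
  · rw [htotal, Fintype.card_fin, div_eq_inv_mul]

lemma exists_fractional_covering {p q : ℕ} (hq : 0 < q) {I : Fin p → Set α}
    (hI : ∀ j, M.Indep (I j)) (hIq : ∀ e ∈ M.E, q ≤ #{j | e ∈ I j}) :
    ∃ kap : Set α → ℝ, (∀ A, 0 ≤ kap A) ∧ (∀ A, ¬ M.IsBase A → kap A = 0) ∧
      (∀ e ∈ M.E, 1 ≤ ∑ A : Set α, A.indicator (fun _ ↦ kap A) e) ∧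
      (p / q : ℝ) = ∑ A : Set α, kap A := by
  choose B hB hIB using fun j ↦ (hI j).exists_isBase_superset
  obtain ⟨kap, h0, hsupp, hload, htotal⟩ :=
    exists_weight_of_family B (inv_nonneg.mpr (Nat.cast_nonneg q))
  refine ⟨kap, h0, fun A hA ↦ hsupp A ?_, fun e he ↦ ?_, ?_⟩
  · rintro ⟨j, rfl⟩
    exact hA (hB j)
  · rw [hload, le_inv_mul_iff₀ (by exact_mod_cast hq), mul_one]
    exact_mod_cast (hIq e he).trans
      (Finset.card_le_card fun j hj ↦ by simpa using hIB j (by simpa using hj))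
  · rw [htotal, Fintype.card_fin, div_eq_inv_mul]

theorem packingValue_eq_strength (hrk : 0 < M.rk' M.E) : M.packingValue = M.strength := by
  obtain ⟨X₀, ⟨hX₀, hlt₀⟩, hmin⟩ := Set.exists_min_image
    {X | X ⊆ M.E ∧ M.rk' (M.E \ X) < M.rk' M.E}
    (fun X ↦ (Nat.card X : ℝ) / ((M.rk' M.E : ℝ) - (M.rk' (M.E \ X) : ℝ))) (toFinite _)
    ⟨M.E, subset_rfl, by rwa [sdiff_self, rk'_empty]⟩
  have hstrength :
      M.strength = (Nat.card X₀ : ℝ) / ((M.rk' M.E : ℝ) - (M.rk' (M.E \ X₀) : ℝ)) :=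
    IsLeast.csInf_eq ⟨⟨X₀, hX₀, hlt₀, rfl⟩,
      by rintro _ ⟨X, hX, hlt, rfl⟩; exact hmin X ⟨hX, hlt⟩⟩
  simp only [Nat.card_coe_set_eq, ← Nat.cast_sub hlt₀.le] at hstrength hmin
  set d := M.rk' M.E - M.rk' (M.E \ X₀)
  have hd : 0 < d := Nat.sub_pos_of_lt hlt₀
  have hcond : ∀ X ⊆ M.E, X₀.ncard * (M.rk' M.E - M.rk' (M.E \ X)) ≤ d * X.ncard := by
    intro X hX
    rcases lt_or_ge (M.rk' (M.E \ X)) (M.rk' M.E) with hlt | hge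
    · have := hmin X ⟨hX, hlt⟩
      rw [← Nat.cast_sub hlt.le, div_le_div_iff₀ (by exact_mod_cast hd)
        (by exact_mod_cast Nat.sub_pos_of_lt hlt)] at this
      rw [mul_comm d]
      exact_mod_cast this
    · simp [Nat.sub_eq_zero_of_le hge]
  obtain ⟨B, hB, hBd⟩ := M.exists_isBase_multipacking _ d hd hcond
  refine hstrength ▸ IsGreatest.csSup_eq ⟨exists_fractional_packing hd hB hBd, ?_⟩
  rintro _ ⟨lam, h0, hbase, hload, rfl⟩
  have := sum_le_ncard_div_of_packing h0 hbase hload hX₀ hlt₀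
  rwa [Nat.card_coe_set_eq, ← Nat.cast_sub hlt₀.le] at this

theorem coveringValue_eq_arboricity (hloop : M.Loopless') (hrk : 0 < M.rk' M.E) :
    M.coveringValue = M.arboricity := by
  obtain ⟨X₀, ⟨hX₀, hpos₀⟩, hmax⟩ := Set.exists_max_image
    {X | X ⊆ M.E ∧ 0 < M.rk' X}
    (fun X ↦ (Nat.card X : ℝ) / (M.rk' X : ℝ)) (toFinite _) ⟨M.E, subset_rfl, hrk⟩
  have harboricity : M.arboricity = (Nat.card X₀ : ℝ) / (M.rk' X₀ : ℝ) :=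
    IsGreatest.csSup_eq ⟨⟨X₀, hX₀, hpos₀, rfl⟩,
      by rintro _ ⟨X, hX, hpos, rfl⟩; exact hmax X ⟨hX, hpos⟩⟩
  simp only [Nat.card_coe_set_eq] at harboricity hmax
  have hcond : ∀ X ⊆ M.E, M.rk' X₀ * X.ncard ≤ X₀.ncard * M.rk' X := by
    intro X hX
    obtain rfl | hne := X.eq_empty_or_nonempty
    · simp
    have hpos := hloop.rk'_pos hX hne
    have := hmax X ⟨hX, hpos⟩
    rw [div_le_div_iff₀ (by exact_mod_cast hpos) (by exact_mod_cast hpos₀)] at this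
    rw [mul_comm]
    exact_mod_cast this
  obtain ⟨I, hI, hIq⟩ := M.exists_indep_multicover _ _ hcond
  refine harboricity ▸ IsLeast.csInf_eq ⟨exists_fractional_covering hpos₀ hI hIq, ?_⟩
  rintro _ ⟨kap, h0, hbase, hload, rfl⟩
  simpa only [Nat.card_coe_set_eq] using ncard_div_le_sum_of_covering h0 hbase hload hX₀ hpos₀

end Fractional

end Matroid

theorem packing_eq_strength_and_covering_eq_arboricity_general {α : Type*} [Fintype α]
    (M : Matroid α)
    (hloop : M.Loopless') (hrk : 0 < M.rk' M.E) :
    M.packingValue = M.strength ∧ M.coveringValue = M.arboricity :=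
  ⟨packingValue_eq_strength hrk, coveringValue_eq_arboricity hloop hrk⟩

/-- The base packing value equals the strength; the base covering value equals the
fractional arboricity. -/
theorem packing_eq_strength_and_covering_eq_arboricity {α : Type*} [Fintype α]
    (M : Matroid α) (hne : M.E.Nonempty)
    (hloop : M.Loopless') (hrk : 0 < M.rk' M.E) :
    M.packingValue = M.strength ∧ M.coveringValue = M.arboricity :=
  packing_eq_strength_and_covering_eq_arboricity_general M hloop hrk
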